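/- Let L ≥ 1, and for each ℓ ∈ Fin L let C_ℓ ≥ 1. Let A be the finite set of all network configurations a = (a_1, …, a_L) with each a_ℓ a natural number satisfying a_ℓ ≤ C_ℓ − 1. Let ℒ : A → ℝ be an arbitrary loss function. For parameters α : Fin L → ℝ define p(a | α) = ∏_{ℓ} Binom(C_ℓ−1, a_ℓ) · exp(α_ℓ · a_ℓ) / (exp(α_ℓ) + 1)^{C_ℓ−1} and J(α) = ∑_{a ∈ A} p(a | α) · ℒ(a). Then for every layer ℓ and every α, the partial derivative of J with respect to α_ℓ exists and equals ∑_{a ∈ A} ℒ(a) · (a_ℓ − (C_ℓ−1) · p_ℓ(α_ℓ)) · p(a | α), where p_ℓ(α_ℓ) = exp(α_ℓ) / (exp(α_ℓ) + 1). -/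

import Mathlib

open Finset

/-- The binomial probability of sampling `a` filters in a layer with `Cl` filters,
parameterized via the sigmoid `p(α) = exp α / (exp α + 1)`. -/
noncomputable def binomialLayerProb (Cl : ℕ) (a : ℕ) (α : ℝ) : ℝ :=
  (((Cl - 1).factorial : ℝ) / ((a.factorial : ℝ) * (((Cl - 1) - a).factorial : ℝ))) *
    Real.exp (α * a) / (Real.exp α + 1) ^ (Cl - 1)

/-- The network configuration probability: the product of the layer probabilities. -/
noncomputable def binomialNetProb (L : ℕ) (C : Fin L → ℕ) (a : Fin L → ℕ)
    (α : Fin L → ℝ) : ℝ :=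
  ∏ r, binomialLayerProb (C r) (a r) (α r)

/-!
Only the `ℓ`-th factor of `p(a | α)` depends on `α ℓ`, and that factor is `exp (s a) / (exp s + 1)^n`
up to a constant, whose logarithmic derivative is `a - n σ(s)` with `σ` the sigmoid. Hence
`∂ p(a | α) / ∂ α ℓ = (a ℓ - (C ℓ - 1) σ(α ℓ)) p(a | α)`, and the expected loss is a finite sum of
such terms.
-/

open Real in
theorem hasDerivAt_exp_mul_div_exp_add_one_pow (a : ℝ) (n : ℕ) (x : ℝ) :
    HasDerivAt (fun s => exp (s * a) / (exp s + 1) ^ n)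
      ((a - n * (exp x / (exp x + 1))) * (exp (x * a) / (exp x + 1) ^ n)) x := by
  have hne : exp x + 1 ≠ 0 := by positivity
  have hnum : HasDerivAt (fun s => exp (s * a)) (exp (x * a) * a) x :=
    (hasDerivAt_mul_const a).exp
  have hden : HasDerivAt (fun s => (exp s + 1) ^ n) (n * (exp x + 1) ^ (n - 1) * exp x) x :=
    ((hasDerivAt_exp x).add_const 1).pow n
  refine (hnum.fun_div hden (pow_ne_zero n hne)).congr_deriv ?_
  rcases n with _ | n
  · simp [mul_comm]
  · simp only [Nat.add_sub_cancel, Nat.cast_add, Nat.cast_one, pow_succ]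
    field_simp

theorem hasDerivAt_binomialLayerProb (Cl a : ℕ) (x : ℝ) :
    HasDerivAt (binomialLayerProb Cl a)
      (((a : ℝ) - ((Cl - 1 : ℕ) : ℝ) * (Real.exp x / (Real.exp x + 1))) *
        binomialLayerProb Cl a x) x := by
  have hfun : (fun y => ((Cl - 1).factorial : ℝ) / (a.factorial * ((Cl - 1) - a).factorial) *
      (Real.exp (y * a) / (Real.exp y + 1) ^ (Cl - 1))) = binomialLayerProb Cl a :=
    funext fun y => (mul_div_assoc _ _ _).symm
  have h := (hasDerivAt_exp_mul_div_exp_add_one_pow a (Cl - 1) x).const_mul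
    (((Cl - 1).factorial : ℝ) / (a.factorial * ((Cl - 1) - a).factorial))
  rw [hfun] at h
  refine h.congr_deriv ?_
  rw [← hfun]
  ring

theorem hasDerivAt_prod_update {𝕜 ι : Type*} [NontriviallyNormedField 𝕜] [Fintype ι]
    [DecidableEq ι] (f : ι → 𝕜 → 𝕜) (x : ι → 𝕜) (i : ι) {c : 𝕜}
    (hf : HasDerivAt (f i) (c * f i (x i)) (x i)) :
    HasDerivAt (fun s => ∏ j, f j (Function.update x i s j)) (c * ∏ j, f j (x j)) (x i) := by
  have hsplit : ∀ y : ι → 𝕜, ∏ j, f j (y j) = f i (y i) * ∏ j ∈ univ.erase i, f j (y j) :=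
    fun y => (mul_prod_erase _ _ (mem_univ i)).symm
  have hrest : ∀ s, ∏ j ∈ univ.erase i, f j (Function.update x i s j) =
      ∏ j ∈ univ.erase i, f j (x j) :=
    fun s => prod_congr rfl fun j hj => by rw [Function.update_of_ne (ne_of_mem_erase hj)]
  simp only [hsplit (Function.update x i _), Function.update_self, hrest, hsplit x, ← mul_assoc]
  exact hf.mul_const _

theorem binomial_expectedLoss_hasDerivAt_general (L : ℕ) (C : Fin L → ℕ)
    (A : Finset (Fin L → ℕ))
    (Loss : (Fin L → ℕ) → ℝ)
    (ℓ : Fin L) (α : Fin L → ℝ) :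
    HasDerivAt (fun s : ℝ =>
      ∑ a ∈ A, binomialNetProb L C a (Function.update α ℓ s) * Loss a)
      (∑ a ∈ A, Loss a *
        ((a ℓ : ℝ) - ((C ℓ - 1 : ℕ) : ℝ) * (Real.exp (α ℓ) / (Real.exp (α ℓ) + 1))) *
        binomialNetProb L C a α)
      (α ℓ) := by
  refine HasDerivAt.fun_sum fun a _ => ?_
  have h := (hasDerivAt_prod_update (fun r => binomialLayerProb (C r) (a r)) α ℓ
    (hasDerivAt_binomialLayerProb (C ℓ) (a ℓ) (α ℓ))).mul_const (Loss a)
  exact h.congr_deriv (by simp only [binomialNetProb]; ring)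

/-- Let `A` be the finite set of all network configurations
(`a ℓ ≤ C ℓ − 1` for every layer) and `J(α) = ∑ a ∈ A, p(a | α) · ℒ(a)` the
expected loss. The partial derivative of `J` with respect to `α ℓ` exists and equals
`∑ a ∈ A, ℒ(a) · (a ℓ − (C ℓ − 1) · p ℓ (α ℓ)) · p(a | α)`. -/
theorem binomial_expectedLoss_hasDerivAt (L : ℕ) (hL : 1 ≤ L) (C : Fin L → ℕ)
    (hC : ∀ ℓ, 1 ≤ C ℓ)
    (A : Finset (Fin L → ℕ))
    (hA : ∀ a : Fin L → ℕ, a ∈ A ↔ ∀ ℓ, a ℓ ≤ C ℓ - 1)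
    (Loss : (Fin L → ℕ) → ℝ)
    (ℓ : Fin L) (α : Fin L → ℝ) :
    HasDerivAt (fun s : ℝ =>
      ∑ a ∈ A, binomialNetProb L C a (Function.update α ℓ s) * Loss a)
      (∑ a ∈ A, Loss a *
        ((a ℓ : ℝ) - ((C ℓ - 1 : ℕ) : ℝ) * (Real.exp (α ℓ) / (Real.exp (α ℓ) + 1))) *
        binomialNetProb L C a α)
      (α ℓ) :=
  binomial_expectedLoss_hasDerivAt_general L C A Loss ℓ α
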